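/- arXiv:1903.10328 — 5 statements merged into one kernel-verified Lean document; each statement's English description precedes it below -/
import Mathlib

section
/- Let f : ℝ^d → ℝ be continuously differentiable and nonnegative, let m > 0 and b ≥ 0, and suppose the dissipativity condition ⟨x, ∇f(x)⟩ ≥ m‖x‖² − b holds for all x ∈ ℝ^d. Then for every x ∈ ℝ^d one has f(x) ≥ (m/3)‖x‖² − (b/2)·log 3. -/
open scoped InnerProductSpace
open Set

/-!
Along the ray `t ↦ t • x`, dissipativity gives `t · d/dt f(t • x) ≥ m t² ‖x‖² − b`, i.e.
`t ↦ f(t • x) − (m/2) t² ‖x‖² + b log t` is nondecreasing on `(0, ∞)`. Comparing its values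
at `t = 1/√3` and `t = 1`, and using `f(x/√3) ≥ 0`, gives the bound.
-/

section Dissipative

variable {E : Type*} [NormedAddCommGroup E] [InnerProductSpace ℝ E] [CompleteSpace E]
  {f : E → ℝ}

theorem DifferentiableAt.hasDerivAt_comp_smul_const {x : E} {t : ℝ}
    (hf : DifferentiableAt ℝ f (t • x)) :
    HasDerivAt (fun s : ℝ => f (s • x)) ⟪x, gradient f (t • x)⟫_ℝ t := by
  have hray : HasDerivAt (fun s : ℝ => s • x) x t := by
    simpa using (hasDerivAt_id t).smul_const x
  rw [← real_inner_comm]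
  exact hf.hasGradientAt.hasFDerivAt.comp_hasDerivAt t hray

theorem monotoneOn_comp_smul_sub_sq_add_log_of_dissipative {m b : ℝ} (hf : Differentiable ℝ f)
    (hdis : ∀ y, m * ‖y‖ ^ 2 - b ≤ ⟪y, gradient f y⟫_ℝ) (x : E) :
    MonotoneOn (fun t => f (t • x) - m / 2 * ‖x‖ ^ 2 * t ^ 2 + b * Real.log t) (Ioi 0) := by
  have hderiv : ∀ t ∈ Ioi (0 : ℝ), HasDerivAt
      (fun t => f (t • x) - m / 2 * ‖x‖ ^ 2 * t ^ 2 + b * Real.log t)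
      (⟪x, gradient f (t • x)⟫_ℝ - m * ‖x‖ ^ 2 * t + b * t⁻¹) t := fun t ht => by
    have hquad := ((hasDerivAt_pow 2 t).const_mul (m / 2 * ‖x‖ ^ 2))
    have hlog := (Real.hasDerivAt_log (ne_of_gt ht)).const_mul b
    refine (((hf (t • x)).hasDerivAt_comp_smul_const.sub hquad).add hlog).congr_deriv ?_
    norm_num
    ring
  refine monotoneOn_of_hasDerivWithinAt_nonneg (convex_Ioi 0)
    (fun t ht => (hderiv t ht).continuousAt.continuousWithinAt)
    (fun t ht => (hderiv t (interior_subset ht)).hasDerivWithinAt) fun t ht => ?_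
  rw [interior_Ioi, mem_Ioi] at ht
  have hdis_ray : m * t ^ 2 * ‖x‖ ^ 2 - b ≤ t * ⟪x, gradient f (t • x)⟫_ℝ := by
    simpa [norm_smul, mul_pow, real_inner_smul_left, mul_assoc] using hdis (t • x)
  have hscaled : t * (⟪x, gradient f (t • x)⟫_ℝ - m * ‖x‖ ^ 2 * t + b * t⁻¹) =
      t * ⟪x, gradient f (t • x)⟫_ℝ - (m * t ^ 2 * ‖x‖ ^ 2 - b) := by
    field_simp
    ring
  exact (mul_nonneg_iff_of_pos_left ht).mp (hscaled ▸ sub_nonneg.mpr hdis_ray)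

end Dissipative

theorem quadratic_lower_bound_general {d : ℕ} (f : EuclideanSpace ℝ (Fin d) → ℝ) (m b : ℝ)
    (hf : ContDiff ℝ 1 f) (hfnn : ∀ x, 0 ≤ f x)
    (hdis : ∀ x : EuclideanSpace ℝ (Fin d), ⟪x, gradient f x⟫_ℝ ≥ m * ‖x‖ ^ 2 - b) :
    ∀ x : EuclideanSpace ℝ (Fin d), f x ≥ m / 3 * ‖x‖ ^ 2 - b / 2 * Real.log 3 := by
  intro x
  set c : ℝ := (√3)⁻¹
  have hc_pos : 0 < c := by positivity
  have hc_le_one : c ≤ 1 := inv_le_one_of_one_le₀ (by simp [Real.one_le_sqrt])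
  have hc_sq : c ^ 2 = 1 / 3 := by simp [c, inv_pow]
  have hc_log : Real.log c = -(Real.log 3 / 2) := by
    simp [c, Real.log_inv, Real.log_sqrt]
  have hmono := monotoneOn_comp_smul_sub_sq_add_log_of_dissipative
    (hf.differentiable one_ne_zero) hdis x hc_pos (mem_Ioi.mpr one_pos) hc_le_one
  simp only [one_smul, one_pow, Real.log_one, mul_zero, mul_one, add_zero, hc_sq, hc_log] at hmono
  linarith [hfnn (c • x)]

/-- If `f : ℝ^d → ℝ` is `C¹`, nonnegative, and satisfies the
dissipativity condition `⟨x, ∇f(x)⟩ ≥ m‖x‖² − b`, then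
`f(x) ≥ (m/3)‖x‖² − (b/2)·log 3`. -/
theorem quadratic_lower_bound {d : ℕ} (f : EuclideanSpace ℝ (Fin d) → ℝ) (m b : ℝ)
    (hf : ContDiff ℝ 1 f) (hfnn : ∀ x, 0 ≤ f x) (hm : 0 < m) (hb : 0 ≤ b)
    (hdis : ∀ x : EuclideanSpace ℝ (Fin d), ⟪x, gradient f x⟫_ℝ ≥ m * ‖x‖ ^ 2 - b) :
    ∀ x : EuclideanSpace ℝ (Fin d), f x ≥ m / 3 * ‖x‖ ^ 2 - b / 2 * Real.log 3 :=
  quadratic_lower_bound_general f m b hf hfnn hdis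
end

section
/- Let μ and ν be probability measures on ℝ^{2d} with finite second moments, and let G : ℝ^{2d} → ℝ be continuously differentiable with ‖∇G(w)‖ ≤ c₁‖w‖ + c₂ for all w, where c₁ > 0 and c₂ ≥ 0. Let p > 1 and q > 1 satisfy 1/p + 1/q = 1, assume ∫‖u‖^q dμ(u) < ∞ and ∫‖v‖^q dν(v) < ∞, and let ξ be any coupling of μ and ν (a probability measure on ℝ^{2d} × ℝ^{2d} whose first marginal is μ and second marginal is ν) with ∫‖u − v‖^p dξ(u,v) < ∞. Then |∫ G dμ − ∫ G dν| ≤ (c₁σ + c₂)·(∫‖u − v‖^p dξ(u,v))^{1/p}, where σ = max{(∫‖u‖^q dμ(u))^{1/q}, (∫‖v‖^q dν(v))^{1/q}}. -/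
open MeasureTheory
open scoped InnerProductSpace

/-! Along the segment from `v` to `u` the gradient is bounded by the affine function
`t ↦ c₁ ((1 - t) ‖v‖ + t ‖u‖) + c₂`; integrating it over `[0, 1]`, rather than taking its maximum,
gives `|G u - G v| ≤ (c₁ (‖u‖ + ‖v‖) / 2 + c₂) ‖u - v‖`. Integrating this against the coupling,
Hölder's inequality bounds `∫ ‖u - v‖ ‖u‖ dξ` and `∫ ‖u - v‖ ‖v‖ dξ` by `σ ‖u - v‖_p`, and
`∫ ‖u - v‖ dξ` by `‖u - v‖_p`. -/

section Holder

variable {α E E' : Type*} [MeasurableSpace α] {μ : Measure α} [NormedAddCommGroup E]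
  [NormedAddCommGroup E'] {p q : ℝ}

theorem memLp_ofReal_of_integrable_norm_rpow {f : α → E} (hf : AEStronglyMeasurable f μ)
    (hp : 0 < p) (h : Integrable (fun x => ‖f x‖ ^ p) μ) : MemLp f (ENNReal.ofReal p) μ :=
  (integrable_norm_rpow_iff hf (by simpa using hp) ENNReal.ofReal_ne_top).1
    (by rwa [ENNReal.toReal_ofReal hp.le])

theorem integrable_norm_mul_norm_of_holderConjugate (hpq : p.HolderConjugate q) {f : α → E}
    {g : α → E'} (hf : MemLp f (ENNReal.ofReal p) μ) (hg : MemLp g (ENNReal.ofReal q) μ) :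
    Integrable (fun x => ‖f x‖ * ‖g x‖) μ :=
  haveI := hpq.ennrealOfReal
  hf.norm.integrable_mul hg.norm

theorem integral_norm_le_integral_norm_rpow [IsProbabilityMeasure μ] (hp : 1 < p) {f : α → E}
    (hf : MemLp f (ENNReal.ofReal p) μ) :
    ∫ x, ‖f x‖ ∂μ ≤ (∫ x, ‖f x‖ ^ p ∂μ) ^ (1 / p) := by
  have hpq := Real.HolderConjugate.conjExponent hp
  simpa [hpq.symm.pos.ne'] using integral_mul_norm_le_Lp_mul_Lq hpq hf.norm (memLp_const (1 : ℝ))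

end Holder

section LinearGrowthGradient

variable {F : Type*} [NormedAddCommGroup F] [InnerProductSpace ℝ F] [CompleteSpace F]
  {G : F → ℝ} {c₁ c₂ p q : ℝ}

theorem sub_le_of_norm_gradient_le (hc₁ : 0 ≤ c₁) (hG : Differentiable ℝ G)
    (hgrad : ∀ w, ‖gradient G w‖ ≤ c₁ * ‖w‖ + c₂) (u v : F) :
    G u - G v ≤ (c₁ * (‖u‖ + ‖v‖) / 2 + c₂) * ‖u - v‖ := by
  have hγ : ∀ t : ℝ, HasDerivAt (fun s : ℝ => G (v + s • (u - v)))
      ⟪gradient G (v + t • (u - v)), u - v⟫_ℝ t := fun t => by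
    have hγ' : HasDerivAt (fun s : ℝ => v + s • (u - v)) (u - v) t := by
      simpa using ((hasDerivAt_id t).smul_const (u - v)).const_add v
    simpa [Function.comp_def] using (hG _).hasGradientAt.hasFDerivAt.comp_hasDerivAt t hγ'
  have hderiv_le : ∀ t ∈ Set.Ioo (0 : ℝ) 1, ⟪gradient G (v + t • (u - v)), u - v⟫_ℝ ≤
      (c₁ * ((1 - t) * ‖v‖ + t * ‖u‖) + c₂) * ‖u - v‖ := by
    rintro t ⟨ht₀, ht₁⟩
    have hγt : ‖v + t • (u - v)‖ ≤ (1 - t) * ‖v‖ + t * ‖u‖ := by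
      rw [show v + t • (u - v) = (1 - t) • v + t • u by module]
      refine (norm_add_le _ _).trans_eq ?_
      rw [norm_smul, norm_smul, Real.norm_of_nonneg (by linarith), Real.norm_of_nonneg ht₀.le]
    calc _ ≤ ‖gradient G (v + t • (u - v))‖ * ‖u - v‖ := real_inner_le_norm _ _
      _ ≤ _ := by gcongr; exact (hgrad _).trans (by gcongr)
  have hbound : ∫ t in (0 : ℝ)..1, (c₁ * ((1 - t) * ‖v‖ + t * ‖u‖) + c₂) * ‖u - v‖ =
      (c₁ * (‖u‖ + ‖v‖) / 2 + c₂) * ‖u - v‖ := by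
    simp_rw [show ∀ t : ℝ, (c₁ * ((1 - t) * ‖v‖ + t * ‖u‖) + c₂) * ‖u - v‖ =
      (c₁ * ‖v‖ + c₂) * ‖u - v‖ + t * (c₁ * (‖u‖ - ‖v‖) * ‖u - v‖) from fun t => by ring]
    rw [intervalIntegral.integral_add (by simp) (by simp)]
    simp only [intervalIntegral.integral_const, intervalIntegral.integral_mul_const, integral_id,
      smul_eq_mul]
    ring
  simpa [hbound] using intervalIntegral.sub_le_integral_of_hasDeriv_right_of_le zero_le_one
    (fun t _ => (hγ t).continuousAt.continuousWithinAt) (fun t _ => (hγ t).hasDerivWithinAt)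
    (by fun_prop : Continuous _).integrableOn_Icc hderiv_le

theorem abs_sub_le_of_norm_gradient_le (hc₁ : 0 ≤ c₁) (hG : Differentiable ℝ G)
    (hgrad : ∀ w, ‖gradient G w‖ ≤ c₁ * ‖w‖ + c₂) (u v : F) :
    |G u - G v| ≤ (c₁ * (‖u‖ + ‖v‖) / 2 + c₂) * ‖u - v‖ := by
  refine abs_sub_le_iff.2 ⟨sub_le_of_norm_gradient_le hc₁ hG hgrad u v, ?_⟩
  simpa [add_comm, norm_sub_rev] using sub_le_of_norm_gradient_le hc₁ hG hgrad v u

variable {Ω : Type*} [MeasurableSpace Ω] {P : Measure Ω} {X Y : Ω → F}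

theorem integrable_comp_of_norm_gradient_le [IsFiniteMeasure P] (hc₁ : 0 ≤ c₁)
    (hG : Differentiable ℝ G) (hgrad : ∀ w, ‖gradient G w‖ ≤ c₁ * ‖w‖ + c₂)
    (hX : AEStronglyMeasurable X P) (hX2 : Integrable (fun ω => ‖X ω‖ ^ 2) P) :
    Integrable (fun ω => G (X ω)) P := by
  have hX1 : Integrable (fun ω => ‖X ω‖) P :=
    ((memLp_two_iff_integrable_sq hX.norm).2 hX2).integrable one_le_two
  refine ((integrable_const |G 0|).add ((hX2.const_mul (c₁ / 2)).add (hX1.const_mul c₂))).mono'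
    (hG.continuous.comp_aestronglyMeasurable hX) (ae_of_all _ fun ω => ?_)
  have h := abs_sub_le_of_norm_gradient_le hc₁ hG hgrad (X ω) 0
  simp only [norm_zero, add_zero, sub_zero] at h
  simp only [Pi.add_apply, Real.norm_eq_abs]
  linarith [abs_sub_abs_le_abs_sub (G (X ω)) (G 0)]

theorem abs_integral_sub_le_of_norm_gradient_le [IsProbabilityMeasure P] (hc₁ : 0 ≤ c₁)
    (hG : Differentiable ℝ G) (hgrad : ∀ w, ‖gradient G w‖ ≤ c₁ * ‖w‖ + c₂)
    (hX : AEStronglyMeasurable X P) (hY : AEStronglyMeasurable Y P) (hpq : p.HolderConjugate q)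
    (hXq : Integrable (fun ω => ‖X ω‖ ^ q) P) (hYq : Integrable (fun ω => ‖Y ω‖ ^ q) P)
    (hXYp : Integrable (fun ω => ‖X ω - Y ω‖ ^ p) P) :
    |∫ ω, G (X ω) - G (Y ω) ∂P| ≤
      (c₁ * max ((∫ ω, ‖X ω‖ ^ q ∂P) ^ (1 / q)) ((∫ ω, ‖Y ω‖ ^ q ∂P) ^ (1 / q)) + c₂) *
        (∫ ω, ‖X ω - Y ω‖ ^ p ∂P) ^ (1 / p) := by
  have hc₂ : 0 ≤ c₂ := by simpa using (norm_nonneg _).trans (hgrad 0)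
  have hXY : MemLp (fun ω => X ω - Y ω) (ENNReal.ofReal p) P :=
    memLp_ofReal_of_integrable_norm_rpow (hX.sub hY) hpq.pos hXYp
  have hXm := memLp_ofReal_of_integrable_norm_rpow hX hpq.symm.pos hXq
  have hYm := memLp_ofReal_of_integrable_norm_rpow hY hpq.symm.pos hYq
  have hX' : Integrable (fun ω => c₁ / 2 * (‖X ω - Y ω‖ * ‖X ω‖)) P :=
    (integrable_norm_mul_norm_of_holderConjugate hpq hXY hXm).const_mul _
  have hY' : Integrable (fun ω => c₁ / 2 * (‖X ω - Y ω‖ * ‖Y ω‖)) P :=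
    (integrable_norm_mul_norm_of_holderConjugate hpq hXY hYm).const_mul _
  have hXY' : Integrable (fun ω => c₁ / 2 * (‖X ω - Y ω‖ * ‖X ω‖) +
      c₁ / 2 * (‖X ω - Y ω‖ * ‖Y ω‖)) P := hX'.add hY'
  have h1 : Integrable (fun ω => c₂ * ‖X ω - Y ω‖) P :=
    ((hXY.integrable (ENNReal.one_le_ofReal.2 hpq.lt.le)).norm).const_mul _
  set W := (∫ ω, ‖X ω - Y ω‖ ^ p ∂P) ^ (1 / p)
  set σX := (∫ ω, ‖X ω‖ ^ q ∂P) ^ (1 / q)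
  set σY := (∫ ω, ‖Y ω‖ ^ q ∂P) ^ (1 / q)
  calc |∫ ω, G (X ω) - G (Y ω) ∂P|
      ≤ ∫ ω, c₁ / 2 * (‖X ω - Y ω‖ * ‖X ω‖) + c₁ / 2 * (‖X ω - Y ω‖ * ‖Y ω‖) +
          c₂ * ‖X ω - Y ω‖ ∂P := by
        rw [← Real.norm_eq_abs]
        refine norm_integral_le_of_norm_le (hXY'.add h1) (ae_of_all _ fun ω => ?_)
        simp only [Real.norm_eq_abs]
        exact (abs_sub_le_of_norm_gradient_le hc₁ hG hgrad (X ω) (Y ω)).trans_eq (by ring)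
    _ = c₁ / 2 * ∫ ω, ‖X ω - Y ω‖ * ‖X ω‖ ∂P + c₁ / 2 * ∫ ω, ‖X ω - Y ω‖ * ‖Y ω‖ ∂P +
          c₂ * ∫ ω, ‖X ω - Y ω‖ ∂P := by
      rw [integral_add hXY' h1, integral_add hX' hY', integral_const_mul,
        integral_const_mul, integral_const_mul]
    _ ≤ c₁ / 2 * (W * σX) + c₁ / 2 * (W * σY) + c₂ * W := by
      gcongr
      · exact integral_mul_norm_le_Lp_mul_Lq hpq hXY hXm
      · exact integral_mul_norm_le_Lp_mul_Lq hpq hXY hYm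
      · exact integral_norm_le_integral_norm_rpow hpq.lt hXY
    _ ≤ c₁ / 2 * (W * max σX σY) + c₁ / 2 * (W * max σX σY) + c₂ * W := by
      have hW : 0 ≤ W := by positivity
      gcongr
      exacts [le_max_left _ _, le_max_right _ _]
    _ = (c₁ * max σX σY + c₂) * W := by ring

end LinearGrowthGradient

theorem integral_sub_integral_le_coupling_general {d : ℕ}
    (μ ν : Measure (EuclideanSpace ℝ (Fin (2 * d))))
    (G : EuclideanSpace ℝ (Fin (2 * d)) → ℝ) (c₁ c₂ p q : ℝ)
    (hG : ContDiff ℝ 1 G) (hc₁ : 0 < c₁)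
    (hgrad : ∀ w : EuclideanSpace ℝ (Fin (2 * d)), ‖gradient G w‖ ≤ c₁ * ‖w‖ + c₂)
    (hp : 1 < p) (hpq : 1 / p + 1 / q = 1)
    (h2μ : Integrable (fun u => ‖u‖ ^ 2) μ) (h2ν : Integrable (fun v => ‖v‖ ^ 2) ν)
    (hqμ : Integrable (fun u => ‖u‖ ^ q) μ) (hqν : Integrable (fun v => ‖v‖ ^ q) ν)
    (ξ : Measure (EuclideanSpace ℝ (Fin (2 * d)) × EuclideanSpace ℝ (Fin (2 * d))))
    [IsProbabilityMeasure ξ]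
    (hξ₁ : ξ.map Prod.fst = μ) (hξ₂ : ξ.map Prod.snd = ν)
    (hξp : Integrable (fun w => ‖w.1 - w.2‖ ^ p) ξ) :
    |(∫ u, G u ∂μ) - ∫ v, G v ∂ν| ≤
      (c₁ * max ((∫ u, ‖u‖ ^ q ∂μ) ^ (1 / q)) ((∫ v, ‖v‖ ^ q ∂ν) ^ (1 / q)) + c₂) *
        (∫ w, ‖w.1 - w.2‖ ^ p ∂ξ) ^ (1 / p) := by
  have hG' : Differentiable ℝ G := hG.differentiable one_ne_zero
  have hpq' : p.HolderConjugate q :=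
    Real.holderConjugate_iff.2 ⟨hp, by simpa only [one_div] using hpq⟩
  have hq_cont : Continuous fun u : EuclideanSpace ℝ (Fin (2 * d)) => ‖u‖ ^ q :=
    continuous_norm.rpow_const fun _ => Or.inr hpq'.symm.nonneg
  subst hξ₁ hξ₂
  rw [integral_map measurable_fst.aemeasurable hG'.continuous.aestronglyMeasurable,
    integral_map measurable_snd.aemeasurable hG'.continuous.aestronglyMeasurable,
    integral_map measurable_fst.aemeasurable hq_cont.aestronglyMeasurable,
    integral_map measurable_snd.aemeasurable hq_cont.aestronglyMeasurable,
    ← integral_sub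
      (integrable_comp_of_norm_gradient_le hc₁.le hG' hgrad continuous_fst.aestronglyMeasurable
        (h2μ.comp_measurable measurable_fst))
      (integrable_comp_of_norm_gradient_le hc₁.le hG' hgrad continuous_snd.aestronglyMeasurable
        (h2ν.comp_measurable measurable_snd))]
  exact abs_integral_sub_le_of_norm_gradient_le hc₁.le hG' hgrad
    continuous_fst.aestronglyMeasurable continuous_snd.aestronglyMeasurable hpq'
    (hqμ.comp_measurable measurable_fst) (hqν.comp_measurable measurable_snd) hξp

/-- Wasserstein-type continuity of integrals of a function with a
linearly growing gradient, along any coupling `ξ` of `μ` and `ν`. -/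
theorem integral_sub_integral_le_coupling {d : ℕ}
    (μ ν : Measure (EuclideanSpace ℝ (Fin (2 * d))))
    [IsProbabilityMeasure μ] [IsProbabilityMeasure ν]
    (G : EuclideanSpace ℝ (Fin (2 * d)) → ℝ) (c₁ c₂ p q : ℝ)
    (hG : ContDiff ℝ 1 G) (hc₁ : 0 < c₁) (hc₂ : 0 ≤ c₂)
    (hgrad : ∀ w : EuclideanSpace ℝ (Fin (2 * d)), ‖gradient G w‖ ≤ c₁ * ‖w‖ + c₂)
    (hp : 1 < p) (hq : 1 < q) (hpq : 1 / p + 1 / q = 1)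
    (h2μ : Integrable (fun u => ‖u‖ ^ 2) μ) (h2ν : Integrable (fun v => ‖v‖ ^ 2) ν)
    (hqμ : Integrable (fun u => ‖u‖ ^ q) μ) (hqν : Integrable (fun v => ‖v‖ ^ q) ν)
    (ξ : Measure (EuclideanSpace ℝ (Fin (2 * d)) × EuclideanSpace ℝ (Fin (2 * d))))
    [IsProbabilityMeasure ξ]
    (hξ₁ : ξ.map Prod.fst = μ) (hξ₂ : ξ.map Prod.snd = ν)
    (hξp : Integrable (fun w => ‖w.1 - w.2‖ ^ p) ξ) :
    |(∫ u, G u ∂μ) - ∫ v, G v ∂ν| ≤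
      (c₁ * max ((∫ u, ‖u‖ ^ q ∂μ) ^ (1 / q)) ((∫ v, ‖v‖ ^ q ∂ν) ^ (1 / q)) + c₂) *
        (∫ w, ‖w.1 - w.2‖ ^ p ∂ξ) ^ (1 / p) :=
  integral_sub_integral_le_coupling_general μ ν G c₁ c₂ p q hG hc₁ hgrad hp hpq h2μ h2ν hqμ hqν ξ
    hξ₁ hξ₂ hξp
end

section
/- Let F : ℝ^d → ℝ be continuously differentiable and let m > 0, b ≥ 0, M > 0, B ≥ 0, A₀ ≥ 0, γ > 0, β > 0. Suppose that for all x ∈ ℝ^d one has ⟨x, ∇F(x)⟩ ≥ m‖x‖² − b and F(x) ≤ (M/2)‖x‖² + B‖x‖ + A₀. Then for every λ_c with 0 < λ_c ≤ min{1/4, m/(M + 2B + γ²/2)} and every A_c ≥ (β/2)(b + 2B + A₀), one has for all x ∈ ℝ^d: ⟨x, ∇F(x)⟩ ≥ 2λ_c·(F(x) + γ²‖x‖²/4) − 2A_c/β. -/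
/-!
Write `r = ‖x‖`. The quadratic upper bound and `2 B r ≤ B (r² + 1)` give
`2 λ_c (F x + γ² r² / 4) ≤ λ_c (M + 2B + γ²/2) r² + λ_c (B + 2 A₀)`. The choice of `λ_c` makes the
quadratic coefficient at most `m`, which the dissipativity bound `⟪x, ∇F x⟫ ≥ m r² - b` pays for,
and `λ_c ≤ 1/4` leaves a constant that `2 A_c / β ≥ b + 2B + A₀` absorbs.
-/

open scoped InnerProductSpace

lemma mul_le_of_le_div_of_pos {a m D : ℝ} (ha : 0 < a) (hm : 0 < m) (h : a ≤ m / D) :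
    a * D ≤ m := by
  have hD : 0 < D := by
    by_contra! hD
    exact absurd (h.trans (div_nonpos_of_nonneg_of_nonpos hm.le hD)) ha.not_ge
  exact (le_div_iff₀ hD).mp h

lemma drift_bound_of_dissipative_of_quadratic_bound {m b M B A₀ γ c r f g : ℝ}
    (hB : 0 ≤ B) (hA₀ : 0 ≤ A₀) (hc : 0 ≤ c) (hc₁ : c ≤ 1 / 4)
    (hcm : c * (M + 2 * B + γ ^ 2 / 2) ≤ m)
    (hg : m * r ^ 2 - b ≤ g) (hf : f ≤ M / 2 * r ^ 2 + B * r + A₀) :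
    2 * c * (f + γ ^ 2 * r ^ 2 / 4) - (b + 2 * B + A₀) ≤ g := by
  have hlinear : 2 * B * r ≤ B * (r ^ 2 + 1) := by nlinarith [sq_nonneg (r - 1)]
  calc 2 * c * (f + γ ^ 2 * r ^ 2 / 4) - (b + 2 * B + A₀)
      ≤ c * (M * r ^ 2 + B * (r ^ 2 + 1) + 2 * A₀ + γ ^ 2 * r ^ 2 / 2) - (b + 2 * B + A₀) := by
        nlinarith [mul_le_mul_of_nonneg_left hf hc, mul_le_mul_of_nonneg_left hlinear hc]
    _ ≤ c * (M + 2 * B + γ ^ 2 / 2) * r ^ 2 + c * (B + 2 * A₀) - (b + 2 * B + A₀) := by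
        nlinarith [mul_nonneg (mul_nonneg hc hB) (sq_nonneg r)]
    _ ≤ m * r ^ 2 - b := by
        nlinarith [mul_le_mul_of_nonneg_right hcm (sq_nonneg r)]
    _ ≤ g := hg

theorem drift_condition_general {d : ℕ} (F : EuclideanSpace ℝ (Fin d) → ℝ)
    (m b M B A₀ γ β : ℝ)
    (hm : 0 < m) (hB : 0 ≤ B)
    (hA₀ : 0 ≤ A₀) (hβ : 0 < β)
    (hdis : ∀ x : EuclideanSpace ℝ (Fin d), ⟪x, gradient F x⟫_ℝ ≥ m * ‖x‖ ^ 2 - b)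
    (hupper : ∀ x : EuclideanSpace ℝ (Fin d),
      F x ≤ M / 2 * ‖x‖ ^ 2 + B * ‖x‖ + A₀) :
    ∀ lc Ac : ℝ, 0 < lc → lc ≤ min (1 / 4) (m / (M + 2 * B + γ ^ 2 / 2)) →
      β / 2 * (b + 2 * B + A₀) ≤ Ac →
      ∀ x : EuclideanSpace ℝ (Fin d),
        ⟪x, gradient F x⟫_ℝ ≥ 2 * lc * (F x + γ ^ 2 * ‖x‖ ^ 2 / 4) - 2 * Ac / β := by
  intro lc Ac hlc hle hAc x
  have hlcm : lc * (M + 2 * B + γ ^ 2 / 2) ≤ m :=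
    mul_le_of_le_div_of_pos hlc hm (hle.trans (min_le_right _ _))
  have hconst : b + 2 * B + A₀ ≤ 2 * Ac / β := by
    rw [le_div_iff₀ hβ]
    linarith
  have hdrift := drift_bound_of_dissipative_of_quadratic_bound hB hA₀ hlc.le
    (hle.trans (min_le_left _ _)) hlcm (hdis x) (hupper x)
  linarith

/-- The dissipativity condition together with the quadratic upper bound
implies the drift condition `⟨x, ∇F(x)⟩ ≥ 2λ_c(F(x) + γ²‖x‖²/4) − 2A_c/β`. -/
theorem drift_condition {d : ℕ} (F : EuclideanSpace ℝ (Fin d) → ℝ)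
    (m b M B A₀ γ β : ℝ)
    (hF : ContDiff ℝ 1 F) (hm : 0 < m) (hb : 0 ≤ b) (hM : 0 < M) (hB : 0 ≤ B)
    (hA₀ : 0 ≤ A₀) (hγ : 0 < γ) (hβ : 0 < β)
    (hdis : ∀ x : EuclideanSpace ℝ (Fin d), ⟪x, gradient F x⟫_ℝ ≥ m * ‖x‖ ^ 2 - b)
    (hupper : ∀ x : EuclideanSpace ℝ (Fin d),
      F x ≤ M / 2 * ‖x‖ ^ 2 + B * ‖x‖ + A₀) :
    ∀ lc Ac : ℝ, 0 < lc → lc ≤ min (1 / 4) (m / (M + 2 * B + γ ^ 2 / 2)) →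
      β / 2 * (b + 2 * B + A₀) ≤ Ac →
      ∀ x : EuclideanSpace ℝ (Fin d),
        ⟪x, gradient F x⟫_ℝ ≥ 2 * lc * (F x + γ ^ 2 * ‖x‖ ^ 2 / 4) - 2 * Ac / β :=
  drift_condition_general F m b M B A₀ γ β hm hB hA₀ hβ hdis hupper
end

section
/- Let γ > 0, α_c > 0, ε_c > 0, let 𝒱 : ℝ^d × ℝ^d → [0,∞) be measurable, and let h : [0,∞) → [0,∞) be a function with h(t) ≤ t for all t ≥ 0. Define r((x₁,v₁),(x₂,v₂)) = α_c‖x₁ − x₂‖ + ‖x₁ − x₂ + γ⁻¹(v₁ − v₂)‖ and ρ((x₁,v₁),(x₂,v₂)) = h(r((x₁,v₁),(x₂,v₂)))·(1 + ε_c·𝒱(x₁,v₁) + ε_c·𝒱(x₂,v₂)). Let μ, ν be probability measures on ℝ^d × ℝ^d with ∫𝒱² dμ < ∞ and ∫𝒱² dν < ∞, and let ξ be any coupling of μ and ν. Then ∫ ρ((x₁,v₁),(x₂,v₂)) dξ ≤ c₁₇·(1 + ε_c·(∫𝒱² dμ)^{1/2} + ε_c·(∫𝒱² dν)^{1/2})·(∫‖(x₁,v₁)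 − (x₂,v₂)‖² dξ)^{1/2}, where c₁₇ = 3·max{1 + α_c, γ⁻¹}. -/
/-!
Pointwise, `h(r) ≤ r ≤ √2 · max(1 + α_c, γ⁻¹) · ‖(x₁,v₁) − (x₂,v₂)‖`. Cauchy–Schwarz under `ξ` then
bounds the `ρ`-cost by `√2 · max(1 + α_c, γ⁻¹)` times the `L²(ξ)` norms of the distance and of the
weight `1 + ε_c 𝒱(x₁,v₁) + ε_c 𝒱(x₂,v₂)`. By Minkowski's inequality and the marginal conditions, the
latter is at most `1 + ε_c ‖𝒱‖_{L²(μ)} + ε_c ‖𝒱‖_{L²(ν)}`, and `√2 ≤ 3`.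
-/

open MeasureTheory
open scoped ENNReal

theorem add_le_sqrt_two_mul_sqrt_sq_add_sq (a b : ℝ) : a + b ≤ √2 * √(a ^ 2 + b ^ 2) := by
  rw [← Real.sqrt_mul zero_le_two]
  calc a + b ≤ |a + b| := le_abs_self _
    _ = √((a + b) ^ 2) := (Real.sqrt_sq_eq_abs _).symm
    _ ≤ √(2 * (a ^ 2 + b ^ 2)) := Real.sqrt_le_sqrt (by nlinarith [sq_nonneg (a - b)])

theorem mul_norm_add_norm_add_inv_smul_le {E : Type*} [NormedAddCommGroup E] [NormedSpace ℝ E]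
    {α γ : ℝ} (hγ : 0 < γ) (x v : E) :
    α * ‖x‖ + ‖x + γ⁻¹ • v‖ ≤ √2 * max (1 + α) γ⁻¹ * √(‖x‖ ^ 2 + ‖v‖ ^ 2) := by
  calc α * ‖x‖ + ‖x + γ⁻¹ • v‖ ≤ (1 + α) * ‖x‖ + γ⁻¹ * ‖v‖ := by
        have := norm_add_le x (γ⁻¹ • v)
        rw [norm_smul, Real.norm_of_nonneg (inv_pos.2 hγ).le] at this
        linarith
    _ ≤ max (1 + α) γ⁻¹ * (‖x‖ + ‖v‖) := by
        rw [mul_add]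
        gcongr
        exacts [le_max_left _ _, le_max_right _ _]
    _ ≤ max (1 + α) γ⁻¹ * (√2 * √(‖x‖ ^ 2 + ‖v‖ ^ 2)) := by
        gcongr
        exact add_le_sqrt_two_mul_sqrt_sq_add_sq _ _
    _ = √2 * max (1 + α) γ⁻¹ * √(‖x‖ ^ 2 + ‖v‖ ^ 2) := by ring

theorem ofReal_mul_le_ofReal_mul_enorm_sqrt_mul {E : Type*} [NormedAddCommGroup E]
    [NormedSpace ℝ E] {α γ : ℝ} (hα : 0 ≤ α) (hγ : 0 < γ) {h : ℝ → ℝ}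
    (hht : ∀ t, 0 ≤ t → h t ≤ t) (x v : E) {b : ℝ} (hb : 0 ≤ b) :
    ENNReal.ofReal (h (α * ‖x‖ + ‖x + γ⁻¹ • v‖) * b) ≤
      ENNReal.ofReal (√2 * max (1 + α) γ⁻¹) * ‖√(‖x‖ ^ 2 + ‖v‖ ^ 2) * b‖ₑ := by
  rw [Real.enorm_of_nonneg (by positivity), ← ENNReal.ofReal_mul (by positivity), ← mul_assoc]
  exact ENNReal.ofReal_le_ofReal <| mul_le_mul_of_nonneg_right
    ((hht _ (by positivity)).trans (mul_norm_add_norm_add_inv_smul_le hγ x v)) hb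

section LpBounds

variable {α β : Type*} [MeasurableSpace α] [MeasurableSpace β]

theorem eLpNorm_sqrt_two (q : α → ℝ) (μ : Measure α) :
    eLpNorm (fun x => √(q x)) 2 μ = (∫⁻ x, ENNReal.ofReal (q x) ∂μ) ^ ((1 : ℝ) / 2) := by
  rw [eLpNorm_eq_lintegral_rpow_enorm_toReal two_ne_zero ENNReal.ofNat_ne_top]
  congr 2 with x
  rw [Real.enorm_of_nonneg (Real.sqrt_nonneg _), ENNReal.toReal_ofNat,
    ENNReal.ofReal_rpow_of_nonneg (Real.sqrt_nonneg _) zero_le_two]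
  rcases le_total 0 (q x) with hq | hq
  · norm_num [Real.sq_sqrt hq]
  · simp [Real.sqrt_eq_zero_of_nonpos hq, ENNReal.ofReal_of_nonpos hq]

theorem eLpNorm_two_eq_ofReal_integral_sq_rpow {μ : Measure α} {f : α → ℝ}
    (hf : AEStronglyMeasurable f μ) (hf2 : Integrable (fun x => f x ^ 2) μ) :
    eLpNorm f 2 μ = ENNReal.ofReal ((∫ x, f x ^ 2 ∂μ) ^ ((1 : ℝ) / 2)) := by
  rw [((memLp_two_iff_integrable_sq hf).2 hf2).eLpNorm_eq_integral_rpow_norm two_ne_zero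
    ENNReal.ofNat_ne_top]
  norm_num

theorem lintegral_enorm_mul_le_eLpNorm_two_mul_eLpNorm_two {μ : Measure α} {f g : α → ℝ}
    (hf : AEStronglyMeasurable f μ) (hg : AEStronglyMeasurable g μ) :
    ∫⁻ x, ‖f x * g x‖ₑ ∂μ ≤ eLpNorm f 2 μ * eLpNorm g 2 μ := by
  simpa [eLpNorm_one_eq_lintegral_enorm] using
    eLpNorm_le_eLpNorm_mul_eLpNorm'_of_norm (p := 2) (q := 2) (r := 1) hf hg (· * ·) 1
      (.of_forall fun x => by simp [norm_mul])

theorem eLpNorm_one_add_mul_fst_add_mul_snd_le {ξ : Measure (α × β)} [IsProbabilityMeasure ξ]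
    {p : ℝ≥0∞} (hp : 1 ≤ p) {f : α → ℝ} {g : β → ℝ}
    (hf : AEStronglyMeasurable f (ξ.map Prod.fst)) (hg : AEStronglyMeasurable g (ξ.map Prod.snd))
    (c : ℝ) :
    eLpNorm (fun w => 1 + c * f w.1 + c * g w.2) p ξ ≤
      1 + ‖c‖ₑ * eLpNorm f p (ξ.map Prod.fst) + ‖c‖ₑ * eLpNorm g p (ξ.map Prod.snd) := by
  have hf' : AEStronglyMeasurable (c • f ∘ Prod.fst) ξ :=
    (hf.comp_measurable measurable_fst).const_smul c
  have hg' : AEStronglyMeasurable (c • g ∘ Prod.snd) ξ :=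
    (hg.comp_measurable measurable_snd).const_smul c
  calc eLpNorm (fun w => 1 + c * f w.1 + c * g w.2) p ξ
      ≤ eLpNorm (fun _ => (1 : ℝ)) p ξ + eLpNorm (c • f ∘ Prod.fst) p ξ +
          eLpNorm (c • g ∘ Prod.snd) p ξ := by
        refine (eLpNorm_add_le (aestronglyMeasurable_const.add hf') hg' hp).trans ?_
        gcongr
        exact eLpNorm_add_le aestronglyMeasurable_const hf' hp
    _ = _ := by
        rw [eLpNorm_const _ (zero_lt_one.trans_le hp).ne' (IsProbabilityMeasure.ne_zero ξ),
          eLpNorm_const_smul, eLpNorm_const_smul,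
          eLpNorm_map_measure hf measurable_fst.aemeasurable,
          eLpNorm_map_measure hg measurable_snd.aemeasurable]
        simp

theorem eLpNorm_two_one_add_mul_fst_add_mul_snd_le_ofReal {ξ : Measure (α × α)}
    [IsProbabilityMeasure ξ] {μ ν : Measure α} (hξ₁ : ξ.map Prod.fst = μ)
    (hξ₂ : ξ.map Prod.snd = ν) {V : α → ℝ} (hV : Measurable V)
    (hVμ : Integrable (fun x => V x ^ 2) μ) (hVν : Integrable (fun x => V x ^ 2) ν)
    {c : ℝ} (hc : 0 ≤ c) :
    eLpNorm (fun w => 1 + c * V w.1 + c * V w.2) 2 ξ ≤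
      ENNReal.ofReal (1 + c * (∫ x, V x ^ 2 ∂μ) ^ ((1 : ℝ) / 2) +
        c * (∫ x, V x ^ 2 ∂ν) ^ ((1 : ℝ) / 2)) := by
  subst hξ₁ hξ₂
  refine (eLpNorm_one_add_mul_fst_add_mul_snd_le one_le_two hV.aestronglyMeasurable
    hV.aestronglyMeasurable c).trans_eq ?_
  rw [eLpNorm_two_eq_ofReal_integral_sq_rpow hV.aestronglyMeasurable hVμ,
    eLpNorm_two_eq_ofReal_integral_sq_rpow hV.aestronglyMeasurable hVν,
    Real.enorm_of_nonneg hc, ← ENNReal.ofReal_mul hc, ← ENNReal.ofReal_mul hc,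
    ← ENNReal.ofReal_one, ← ENNReal.ofReal_add zero_le_one (by positivity),
    ← ENNReal.ofReal_add (by positivity) (by positivity)]

end LpBounds

theorem rho_cost_le_quadratic_cost_general {d : ℕ} (γ αc εc : ℝ)
    (hγ : 0 < γ) (hαc : 0 < αc) (hεc : 0 < εc)
    (V : EuclideanSpace ℝ (Fin d) × EuclideanSpace ℝ (Fin d) → ℝ)
    (hVmeas : Measurable V) (hVnn : ∀ w, 0 ≤ V w)
    (h : ℝ → ℝ) (hht : ∀ t, 0 ≤ t → h t ≤ t)
    (μ ν : Measure (EuclideanSpace ℝ (Fin d) × EuclideanSpace ℝ (Fin d)))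
    (hV2μ : Integrable (fun w => V w ^ 2) μ) (hV2ν : Integrable (fun w => V w ^ 2) ν)
    (ξ : Measure ((EuclideanSpace ℝ (Fin d) × EuclideanSpace ℝ (Fin d)) ×
      (EuclideanSpace ℝ (Fin d) × EuclideanSpace ℝ (Fin d))))
    [IsProbabilityMeasure ξ]
    (hξ₁ : ξ.map Prod.fst = μ) (hξ₂ : ξ.map Prod.snd = ν) :
    (∫⁻ w, ENNReal.ofReal
        (h (αc * ‖w.1.1 - w.2.1‖ + ‖w.1.1 - w.2.1 + γ⁻¹ • (w.1.2 - w.2.2)‖) *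
          (1 + εc * V w.1 + εc * V w.2)) ∂ξ) ≤
      ENNReal.ofReal (3 * max (1 + αc) γ⁻¹ *
          (1 + εc * (∫ w, V w ^ 2 ∂μ) ^ ((1 : ℝ) / 2) +
            εc * (∫ w, V w ^ 2 ∂ν) ^ ((1 : ℝ) / 2))) *
        (∫⁻ w, ENNReal.ofReal (‖w.1.1 - w.2.1‖ ^ 2 + ‖w.1.2 - w.2.2‖ ^ 2) ∂ξ) ^
          ((1 : ℝ) / 2) := by
  set M := max (1 + αc) γ⁻¹
  set D := fun w : (EuclideanSpace ℝ (Fin d) × EuclideanSpace ℝ (Fin d)) ×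
      (EuclideanSpace ℝ (Fin d) × EuclideanSpace ℝ (Fin d)) =>
    √(‖w.1.1 - w.2.1‖ ^ 2 + ‖w.1.2 - w.2.2‖ ^ 2)
  set W := fun w : (EuclideanSpace ℝ (Fin d) × EuclideanSpace ℝ (Fin d)) ×
      (EuclideanSpace ℝ (Fin d) × EuclideanSpace ℝ (Fin d)) => 1 + εc * V w.1 + εc * V w.2
  set S := 1 + εc * (∫ w, V w ^ 2 ∂μ) ^ ((1 : ℝ) / 2) + εc * (∫ w, V w ^ 2 ∂ν) ^ ((1 : ℝ) / 2)
  have hW w : 0 ≤ W w := by have := hVnn w.1; have := hVnn w.2; positivity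
  calc _ ≤ ∫⁻ w, ENNReal.ofReal (√2 * M) * ‖D w * W w‖ₑ ∂ξ :=
        lintegral_mono fun w => ofReal_mul_le_ofReal_mul_enorm_sqrt_mul hαc.le hγ hht _ _ (hW w)
    _ = ENNReal.ofReal (√2 * M) * ∫⁻ w, ‖D w * W w‖ₑ ∂ξ :=
        lintegral_const_mul' _ _ ENNReal.ofReal_ne_top
    _ ≤ ENNReal.ofReal (√2 * M) * (eLpNorm D 2 ξ * eLpNorm W 2 ξ) := by
        gcongr
        exact lintegral_enorm_mul_le_eLpNorm_two_mul_eLpNorm_two (by fun_prop) (by fun_prop)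
    _ ≤ ENNReal.ofReal (√2 * M) * ((∫⁻ w, ENNReal.ofReal
          (‖w.1.1 - w.2.1‖ ^ 2 + ‖w.1.2 - w.2.2‖ ^ 2) ∂ξ) ^ ((1 : ℝ) / 2) * ENNReal.ofReal S) := by
        rw [eLpNorm_sqrt_two]
        gcongr
        exact eLpNorm_two_one_add_mul_fst_add_mul_snd_le_ofReal hξ₁ hξ₂ hVmeas hV2μ hV2ν hεc.le
    _ ≤ _ := by
        rw [mul_left_comm, ← ENNReal.ofReal_mul (by positivity), mul_comm]
        gcongr
        exact Real.sqrt_le_iff.2 ⟨by norm_num, by norm_num⟩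

/-- bound of the semimetric `ρ`-cost of any coupling `ξ` of `μ` and `ν`
by the quadratic cost, where
`ρ = h(r)·(1 + ε_c 𝒱(x₁,v₁) + ε_c 𝒱(x₂,v₂))`,
`r((x₁,v₁),(x₂,v₂)) = α_c‖x₁ − x₂‖ + ‖x₁ − x₂ + γ⁻¹(v₁ − v₂)‖`, and
`c₁₇ = 3·max{1 + α_c, γ⁻¹}`. -/
theorem rho_cost_le_quadratic_cost {d : ℕ} (γ αc εc : ℝ)
    (hγ : 0 < γ) (hαc : 0 < αc) (hεc : 0 < εc)
    (V : EuclideanSpace ℝ (Fin d) × EuclideanSpace ℝ (Fin d) → ℝ)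
    (hVmeas : Measurable V) (hVnn : ∀ w, 0 ≤ V w)
    (h : ℝ → ℝ) (hh0 : ∀ t, 0 ≤ t → 0 ≤ h t) (hht : ∀ t, 0 ≤ t → h t ≤ t)
    (μ ν : Measure (EuclideanSpace ℝ (Fin d) × EuclideanSpace ℝ (Fin d)))
    [IsProbabilityMeasure μ] [IsProbabilityMeasure ν]
    (hV2μ : Integrable (fun w => V w ^ 2) μ) (hV2ν : Integrable (fun w => V w ^ 2) ν)
    (ξ : Measure ((EuclideanSpace ℝ (Fin d) × EuclideanSpace ℝ (Fin d)) ×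
      (EuclideanSpace ℝ (Fin d) × EuclideanSpace ℝ (Fin d))))
    [IsProbabilityMeasure ξ]
    (hξ₁ : ξ.map Prod.fst = μ) (hξ₂ : ξ.map Prod.snd = ν) :
    (∫⁻ w, ENNReal.ofReal
        (h (αc * ‖w.1.1 - w.2.1‖ + ‖w.1.1 - w.2.1 + γ⁻¹ • (w.1.2 - w.2.2)‖) *
          (1 + εc * V w.1 + εc * V w.2)) ∂ξ) ≤
      ENNReal.ofReal (3 * max (1 + αc) γ⁻¹ *
          (1 + εc * (∫ w, V w ^ 2 ∂μ) ^ ((1 : ℝ) / 2) +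
            εc * (∫ w, V w ^ 2 ∂ν) ^ ((1 : ℝ) / 2))) *
        (∫⁻ w, ENNReal.ofReal (‖w.1.1 - w.2.1‖ ^ 2 + ‖w.1.2 - w.2.2‖ ^ 2) ∂ξ) ^
          ((1 : ℝ) / 2) :=
  rho_cost_le_quadratic_cost_general γ αc εc hγ hαc hεc V hVmeas hVnn h hht μ ν hV2μ hV2ν ξ hξ₁ hξ₂
end

section
/- Let β > 0, γ > 0, λ_c ∈ (0, 1/4), M > 0, B ≥ 0. Let F : ℝ^d → ℝ be continuously differentiable, nonnegative, and satisfy ‖∇F(x)‖ ≤ M‖x‖ + B for all x. Define the Lyapunov function 𝒱(x,v) = β·F(x) + (β/4)·γ²·(‖x + γ⁻¹v‖² + ‖γ⁻¹v‖² − λ_c‖x‖²) and ℰ(x,v) = (M/2 + γ²/4 − γ²λ_c/4)‖v‖² + (3/2)(M‖x‖ + B)² + (γ/2)⟨∇F(x), v⟩. Then for all (x,v) ∈ ℝ^d × ℝ^d one has ℰ(x,v) ≤ K₁·𝒱(x,v)/β + K₂, where K₁ = max{ 16M²(3 + 2γ)/((1 − 2λ_c)γ²), 8(M/2 + γ²/4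 − γ²λ_c/4 + γ)/(1 − 2λ_c) } and K₂ = B²(3 + 2γ). -/
/-!
Write `u = γ⁻¹ v`. Since `‖x‖ ≤ ‖x + u‖ + ‖u‖`, the quadratic part of `𝒱/β` dominates
`(1 - 2λ_c)(γ²‖x‖²/16 + ‖v‖²/8)` when `0 ≤ λ_c ≤ 1/2`, and `F ≥ 0` lets us drop `F`.
On the other side, Cauchy–Schwarz, the gradient bound and AM–GM bound `ℰ` by
`M²(3 + 2γ)‖x‖² + (M/2 + γ²/4 − γ²λ_c/4 + γ)‖v‖² + B²(3 + 2γ)`.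
Its coefficients of `‖x‖²` and `‖v‖²` are those of the lower bound times the two entries of the
maximum `K₁`, so `ℰ ≤ K₁ 𝒱/β + K₂`.
-/

open scoped InnerProductSpace

noncomputable def lyapunov {E : Type*} [SeminormedAddCommGroup E] [NormedSpace ℝ E] (F : E → ℝ)
    (β γ lc : ℝ) (x v : E) : ℝ :=
  β * F x + β / 4 * γ ^ 2 * (‖x + γ⁻¹ • v‖ ^ 2 + ‖γ⁻¹ • v‖ ^ 2 - lc * ‖x‖ ^ 2)

lemma norm_sq_div_four_add_le {E : Type*} [SeminormedAddCommGroup E] (x u : E) {lc : ℝ}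
    (hlc₀ : 0 ≤ lc) (hlc₁ : lc ≤ 1 / 2) :
    (1 - 2 * lc) * (‖x‖ ^ 2 / 4 + ‖u‖ ^ 2 / 2) ≤ ‖x + u‖ ^ 2 + ‖u‖ ^ 2 - lc * ‖x‖ ^ 2 := by
  have hx : ‖x‖ ^ 2 ≤ 2 * (‖x + u‖ ^ 2 + ‖u‖ ^ 2) :=
    (pow_le_pow_left₀ (norm_nonneg x) (norm_le_add_norm_add x u) 2).trans add_sq_le
  nlinarith [mul_le_mul_of_nonneg_left hx hlc₀, sq_nonneg ‖x + u‖]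

lemma lyapunov_div_ge {E : Type*} [SeminormedAddCommGroup E] [NormedSpace ℝ E] {F : E → ℝ}
    {β γ lc : ℝ} (hβ : β ≠ 0) (hγ : γ ≠ 0) (hlc₀ : 0 ≤ lc) (hlc₁ : lc ≤ 1 / 2)
    (x v : E) (hFx : 0 ≤ F x) :
    (1 - 2 * lc) * γ ^ 2 / 16 * ‖x‖ ^ 2 + (1 - 2 * lc) / 8 * ‖v‖ ^ 2 ≤
      lyapunov F β γ lc x v / β := by
  have hquad := mul_le_mul_of_nonneg_left (norm_sq_div_four_add_le x (γ⁻¹ • v) hlc₀ hlc₁)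
    (by positivity : 0 ≤ γ ^ 2 / 4)
  have hu : γ ^ 2 * ‖γ⁻¹ • v‖ ^ 2 = ‖v‖ ^ 2 := by
    rw [norm_smul, norm_inv, Real.norm_eq_abs, mul_pow, ← mul_assoc, inv_pow, sq_abs,
      mul_inv_cancel₀ (pow_ne_zero 2 hγ), one_mul]
  have hV : lyapunov F β γ lc x v / β =
      F x + γ ^ 2 / 4 * (‖x + γ⁻¹ • v‖ ^ 2 + ‖γ⁻¹ • v‖ ^ 2 - lc * ‖x‖ ^ 2) := by
    unfold lyapunov
    field_simp
  rw [hV]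
  linear_combination hFx + hquad - (1 - 2 * lc) / 8 * hu

lemma error_term_le {E : Type*} [NormedAddCommGroup E] [InnerProductSpace ℝ E]
    {γ c M B : ℝ} (hγ : 0 ≤ γ) {g x : E} (hg : ‖g‖ ≤ M * ‖x‖ + B) (v : E) :
    c * ‖v‖ ^ 2 + 3 / 2 * (M * ‖x‖ + B) ^ 2 + γ / 2 * ⟪g, v⟫_ℝ ≤
      M ^ 2 * (3 + 2 * γ) * ‖x‖ ^ 2 + (c + γ) * ‖v‖ ^ 2 + B ^ 2 * (3 + 2 * γ) := by
  have hcs : ⟪g, v⟫_ℝ ≤ (M * ‖x‖ + B) * ‖v‖ :=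
    (real_inner_le_norm g v).trans (mul_le_mul_of_nonneg_right hg (norm_nonneg v))
  have hsq : (M * ‖x‖ + B) ^ 2 ≤ 2 * (M ^ 2 * ‖x‖ ^ 2 + B ^ 2) := by
    simpa only [mul_pow] using add_sq_le (a := M * ‖x‖) (b := B)
  have hamgm : γ / 2 * ((M * ‖x‖ + B) * ‖v‖) ≤ γ / 4 * ((M * ‖x‖ + B) ^ 2 + ‖v‖ ^ 2) := by
    nlinarith [mul_nonneg hγ (sq_nonneg (M * ‖x‖ + B - ‖v‖))]
  nlinarith [mul_le_mul_of_nonneg_left hcs (by positivity : 0 ≤ γ / 2),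
    mul_le_mul_of_nonneg_left hsq hγ, mul_nonneg hγ (sq_nonneg ‖v‖),
    mul_nonneg hγ (add_nonneg (sq_nonneg (M * ‖x‖)) (sq_nonneg B))]

lemma mul_add_mul_le_max_div_mul {A C p q X Y : ℝ} (hp : 0 < p) (hq : 0 < q)
    (hX : 0 ≤ X) (hY : 0 ≤ Y) :
    A * X + C * Y ≤ max (A / p) (C / q) * (p * X + q * Y) := by
  calc A * X + C * Y = A / p * (p * X) + C / q * (q * Y) := by field_simp
    _ ≤ max (A / p) (C / q) * (p * X) + max (A / p) (C / q) * (q * Y) := by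
      gcongr
      exacts [le_max_left _ _, le_max_right _ _]
    _ = max (A / p) (C / q) * (p * X + q * Y) := by ring

theorem error_term_le_lyapunov_general {d : ℕ} (F : EuclideanSpace ℝ (Fin d) → ℝ)
    (β γ lc M B : ℝ) (hβ : 0 < β) (hγ : 0 < γ) (hlc₀ : 0 < lc) (hlc₁ : lc < 1 / 4)
    (hFnn : ∀ x, 0 ≤ F x)
    (hgrad : ∀ x : EuclideanSpace ℝ (Fin d), ‖gradient F x‖ ≤ M * ‖x‖ + B) :
    ∀ x v : EuclideanSpace ℝ (Fin d),
      (M / 2 + γ ^ 2 / 4 - γ ^ 2 * lc / 4) * ‖v‖ ^ 2 +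
          3 / 2 * (M * ‖x‖ + B) ^ 2 + γ / 2 * ⟪gradient F x, v⟫_ℝ ≤
        max (16 * M ^ 2 * (3 + 2 * γ) / ((1 - 2 * lc) * γ ^ 2))
            (8 * (M / 2 + γ ^ 2 / 4 - γ ^ 2 * lc / 4 + γ) / (1 - 2 * lc)) *
          ((β * F x + β / 4 * γ ^ 2 *
            (‖x + γ⁻¹ • v‖ ^ 2 + ‖γ⁻¹ • v‖ ^ 2 - lc * ‖x‖ ^ 2)) / β) +
          B ^ 2 * (3 + 2 * γ) := by
  intro x v
  have hs : 0 < 1 - 2 * lc := by linarith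
  have hK := mul_add_mul_le_max_div_mul (A := M ^ 2 * (3 + 2 * γ))
    (C := M / 2 + γ ^ 2 / 4 - γ ^ 2 * lc / 4 + γ) (by positivity : 0 < (1 - 2 * lc) * γ ^ 2 / 16)
    (by positivity : 0 < (1 - 2 * lc) / 8) (sq_nonneg ‖x‖) (sq_nonneg ‖v‖)
  rw [div_div_eq_mul_div, div_div_eq_mul_div, mul_comm _ (16 : ℝ), ← mul_assoc,
    mul_comm _ (8 : ℝ)] at hK
  have hK_nonneg : 0 ≤ max (16 * M ^ 2 * (3 + 2 * γ) / ((1 - 2 * lc) * γ ^ 2))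
      (8 * (M / 2 + γ ^ 2 / 4 - γ ^ 2 * lc / 4 + γ) / (1 - 2 * lc)) :=
    le_max_of_le_left (by positivity)
  calc _ ≤ M ^ 2 * (3 + 2 * γ) * ‖x‖ ^ 2 + (M / 2 + γ ^ 2 / 4 - γ ^ 2 * lc / 4 + γ) * ‖v‖ ^ 2
        + B ^ 2 * (3 + 2 * γ) := error_term_le hγ.le (hgrad x) v
    _ ≤ _ := by
      gcongr
      exact hK.trans (mul_le_mul_of_nonneg_left
        (lyapunov_div_ge hβ.ne' hγ.ne' hlc₀.le (by linarith) x v (hFnn x)) hK_nonneg)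

/-- the error term
`ℰ(x,v) = (M/2 + γ²/4 − γ²λ_c/4)‖v‖² + (3/2)(M‖x‖ + B)² + (γ/2)⟨∇F(x), v⟩`
is bounded by `K₁·𝒱(x,v)/β + K₂` where
`𝒱(x,v) = βF(x) + (β/4)γ²(‖x + γ⁻¹v‖² + ‖γ⁻¹v‖² − λ_c‖x‖²)`. -/
theorem error_term_le_lyapunov {d : ℕ} (F : EuclideanSpace ℝ (Fin d) → ℝ)
    (β γ lc M B : ℝ) (hβ : 0 < β) (hγ : 0 < γ) (hlc₀ : 0 < lc) (hlc₁ : lc < 1 / 4)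
    (hM : 0 < M) (hB : 0 ≤ B)
    (hF : ContDiff ℝ 1 F) (hFnn : ∀ x, 0 ≤ F x)
    (hgrad : ∀ x : EuclideanSpace ℝ (Fin d), ‖gradient F x‖ ≤ M * ‖x‖ + B) :
    ∀ x v : EuclideanSpace ℝ (Fin d),
      (M / 2 + γ ^ 2 / 4 - γ ^ 2 * lc / 4) * ‖v‖ ^ 2 +
          3 / 2 * (M * ‖x‖ + B) ^ 2 + γ / 2 * ⟪gradient F x, v⟫_ℝ ≤
        max (16 * M ^ 2 * (3 + 2 * γ) / ((1 - 2 * lc) * γ ^ 2))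
            (8 * (M / 2 + γ ^ 2 / 4 - γ ^ 2 * lc / 4 + γ) / (1 - 2 * lc)) *
          ((β * F x + β / 4 * γ ^ 2 *
            (‖x + γ⁻¹ • v‖ ^ 2 + ‖γ⁻¹ • v‖ ^ 2 - lc * ‖x‖ ^ 2)) / β) +
          B ^ 2 * (3 + 2 * γ) :=
  error_term_le_lyapunov_general F β γ lc M B hβ hγ hlc₀ hlc₁ hFnn hgrad
end
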